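/- Fix an order x₁ ≤ ... ≤ xₙ on n natural numbers. For a counter machine with k counters each making at most r reversals, where counter comparisons are only against the xᵢ, any run traverses at most r * k * (2n+1) distinct modes, where a mode is the tuple of regions of all k counters. -/
import Mathlib


/-- The region index of a value `v` with respect to the nondecreasing constants `c`. -/
def reg (n : ℕ) (c : Fin n → ℕ) (v : ℤ) : Fin (2 * n + 1) :=
  ⟨(Finset.univ.filter (fun i : Fin n => ((c i : ℤ) < v))).card +
      (Finset.univ.filter (fun i : Fin n => ((c i : ℤ) ≤ v))).card, by
    have h1 := Finset.card_filter_le (Finset.univ : Finset (Fin n))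
      (fun i : Fin n => ((c i : ℤ) < v))
    have h2 := Finset.card_filter_le (Finset.univ : Finset (Fin n))
      (fun i : Fin n => ((c i : ℤ) ≤ v))
    simp only [Finset.card_univ, Fintype.card_fin] at h1 h2
    omega⟩

lemma reg_mono (n : ℕ) (c : Fin n → ℕ) : Monotone (reg n c) := by
  intro v w hvw
  simp only [reg, Fin.mk_le_mk]
  apply Nat.add_le_add <;> apply Finset.card_le_card <;> intro i hi <;>
    simp only [Finset.mem_filter, Finset.mem_univ, true_and] at hi ⊢
  · exact lt_of_lt_of_le hi hvw
  · exact le_trans hi hvw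

lemma changes_mono {m : ℕ} (f : ℕ → Fin m) (a b : ℕ)
    (hf : MonotoneOn f (Set.Icc a b)) :
    ((Finset.Ico a b).filter fun i => f i ≠ f (i + 1)).card ≤ m := by
  have key2 : ((Finset.Ico a b).filter fun i => f i ≠ f (i + 1)).card ≤
      (Finset.univ : Finset (Fin m)).card := by
    apply Finset.card_le_card_of_injOn (fun i => f (i + 1)) (fun _ _ => Finset.mem_univ _)
    intro i hi i' hi' h
    simp only [Finset.coe_filter, Finset.mem_Ico, Set.mem_setOf_eq] at hi hi'
    by_contra hne
    have key : ∀ x y : ℕ, (a ≤ x ∧ x < b) ∧ f x ≠ f (x + 1) →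
        (a ≤ y ∧ y < b) ∧ f y ≠ f (y + 1) → x < y → f (x + 1) ≠ f (y + 1) := by
      intro x y hx hy hxy
      have h1 : f (x + 1) ≤ f y := hf ⟨by omega, by omega⟩ ⟨by omega, by omega⟩ (by omega)
      have h2 : f y ≤ f (y + 1) := hf ⟨by omega, by omega⟩ ⟨by omega, by omega⟩ (by omega)
      have h3 : f y < f (y + 1) := lt_of_le_of_ne h2 hy.2
      exact ne_of_lt (lt_of_le_of_lt h1 h3)
    rcases lt_or_gt_of_ne hne with hlt | hgt
    · exact key i i' hi hi' hlt h
    · exact key i' i hi' hi hgt h.symm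
  simpa using key2

lemma changes_anti {m : ℕ} (f : ℕ → Fin m) (a b : ℕ)
    (hf : AntitoneOn f (Set.Icc a b)) :
    ((Finset.Ico a b).filter fun i => f i ≠ f (i + 1)).card ≤ m := by
  have hrev : MonotoneOn (fun i => (f i).rev) (Set.Icc a b) := by
    intro x hx y hy hxy
    exact Fin.rev_le_rev.mpr (hf hx hy hxy)
  have := changes_mono (fun i => (f i).rev) a b hrev
  have heq : ((Finset.Ico a b).filter fun i => f i ≠ f (i + 1)) =
      ((Finset.Ico a b).filter fun i => (f i).rev ≠ (f (i + 1)).rev) := by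
    apply Finset.filter_congr
    intro i _
    simp [Fin.rev_injective.ne_iff]
  rw [heq]
  exact this

lemma exists_piece {m : ℕ} (b : Fin (m + 1) → ℕ) (hb : Monotone b) (i : ℕ)
    (h0 : b 0 ≤ i) (hN : i < b (Fin.last m)) :
    ∃ p : Fin m, b p.castSucc ≤ i ∧ i < b p.succ := by
  have hm : m ≠ 0 := by
    rintro rfl
    have : b 0 = b (Fin.last 0) := by congr
    omega
  set s := Finset.univ.filter (fun q : Fin (m + 1) => b q ≤ i) with hs
  have hne : s.Nonempty := ⟨0, by simp [hs, h0]⟩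
  set q := s.max' hne with hq
  have hqmem : q ∈ s := s.max'_mem hne
  have hqle : b q ≤ i := by simpa [hs] using hqmem
  have hqlt : (q : ℕ) < m := by
    by_contra h
    have : q = Fin.last m := by
      apply Fin.ext
      have := q.isLt
      simp [Fin.last]
      omega
    rw [this] at hqle
    omega
  refine ⟨⟨q, hqlt⟩, ?_, ?_⟩
  · have : Fin.castSucc ⟨(q : ℕ), hqlt⟩ = q := by
      apply Fin.ext; simp
    rw [this]; exact hqle
  · by_contra h
    push_neg at h
    have hmem : Fin.succ ⟨(q : ℕ), hqlt⟩ ∈ s := by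
      simp only [hs, Finset.mem_filter, Finset.mem_univ, true_and]
      exact h
    have := s.le_max' _ hmem
    rw [← hq] at this
    have : ((Fin.succ ⟨(q : ℕ), hqlt⟩ : Fin (m + 1)) : ℕ) ≤ (q : ℕ) := this
    simp at this

theorem stmt_8 (n r k N : ℕ) (c : Fin n → ℕ) (hc : Monotone c)
    (G : ℕ → Fin k → ℤ)
    (hpieces : ∀ j : Fin k, ∃ b : Fin (r + 2) → ℕ,
      b 0 = 0 ∧ b (Fin.last (r + 1)) = N ∧ Monotone b ∧
      ∀ p : Fin (r + 1),
        MonotoneOn (fun i => G i j) (Set.Icc (b p.castSucc) (b p.succ)) ∨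
        AntitoneOn (fun i => G i j) (Set.Icc (b p.castSucc) (b p.succ))) :
    ((Finset.range N).filter
        (fun i => (fun j : Fin k => reg n c (G i j)) ≠
          (fun j : Fin k => reg n c (G (i + 1) j)))).card ≤
      (r + 1) * k * (2 * n + 1) := by
  classical
  have hsub : ((Finset.range N).filter
        (fun i => (fun j : Fin k => reg n c (G i j)) ≠
          (fun j : Fin k => reg n c (G (i + 1) j)))) ⊆
      Finset.univ.biUnion (fun j : Fin k =>
        (Finset.range N).filter (fun i => reg n c (G i j) ≠ reg n c (G (i + 1) j))) := by
    intro i hi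
    simp only [Finset.mem_filter, Finset.mem_range] at hi
    obtain ⟨hiN, hne⟩ := hi
    have : ∃ j : Fin k, reg n c (G i j) ≠ reg n c (G (i + 1) j) := by
      by_contra h
      push_neg at h
      exact hne (funext h)
    obtain ⟨j, hj⟩ := this
    simp only [Finset.mem_biUnion, Finset.mem_univ, Finset.mem_filter, Finset.mem_range]
    exact ⟨j, trivial, hiN, hj⟩
  calc ((Finset.range N).filter _).card
      ≤ (Finset.univ.biUnion (fun j : Fin k =>
        (Finset.range N).filter (fun i => reg n c (G i j) ≠ reg n c (G (i + 1) j)))).card :=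
        Finset.card_le_card hsub
    _ ≤ ∑ j : Fin k, ((Finset.range N).filter
        (fun i => reg n c (G i j) ≠ reg n c (G (i + 1) j))).card :=
        Finset.card_biUnion_le
    _ ≤ ∑ _j : Fin k, (r + 1) * (2 * n + 1) := by
        apply Finset.sum_le_sum
        intro j _
        obtain ⟨b, hb0, hbN, hbmono, hpiece⟩ := hpieces j
        have hcov : ((Finset.range N).filter
            (fun i => reg n c (G i j) ≠ reg n c (G (i + 1) j))) ⊆
            Finset.univ.biUnion (fun p : Fin (r + 1) =>
              (Finset.Ico (b p.castSucc) (b p.succ)).filter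
                (fun i => reg n c (G i j) ≠ reg n c (G (i + 1) j))) := by
          intro i hi
          simp only [Finset.mem_filter, Finset.mem_range] at hi
          obtain ⟨hiN, hne⟩ := hi
          obtain ⟨p, hp1, hp2⟩ := exists_piece b hbmono i (by omega) (by omega)
          simp only [Finset.mem_biUnion, Finset.mem_univ, Finset.mem_filter, Finset.mem_Ico]
          exact ⟨p, trivial, ⟨hp1, hp2⟩, hne⟩
        calc ((Finset.range N).filter _).card
            ≤ (Finset.univ.biUnion (fun p : Fin (r + 1) =>
              (Finset.Ico (b p.castSucc) (b p.succ)).filter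
                (fun i => reg n c (G i j) ≠ reg n c (G (i + 1) j)))).card :=
              Finset.card_le_card hcov
          _ ≤ ∑ p : Fin (r + 1), ((Finset.Ico (b p.castSucc) (b p.succ)).filter
                (fun i => reg n c (G i j) ≠ reg n c (G (i + 1) j))).card :=
              Finset.card_biUnion_le
          _ ≤ ∑ _p : Fin (r + 1), (2 * n + 1) := by
              apply Finset.sum_le_sum
              intro p _
              rcases hpiece p with hmon | hant
              · exact changes_mono (fun i => reg n c (G i j)) _ _
                  ((reg_mono n c).comp_monotoneOn hmon)
              · exact changes_anti (fun i => reg n c (G i j)) _ _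
                  ((reg_mono n c).comp_antitoneOn hant)
          _ = (r + 1) * (2 * n + 1) := by simp [Finset.sum_const, mul_comm]
    _ = (r + 1) * k * (2 * n + 1) := by
        simp [Finset.sum_const]
        ring
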